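/- arXiv:2410.23228 — 4 statements merged into one kernel-verified Lean document; each statement's English description precedes it below -/
import Mathlib

section
/- Let μ₀ and ν₀ be Borel probability measures on ℝ. Suppose T, S : [0,∞) × ℝ → ℝ satisfy: T(0,x) = x and S(0,x) = x for all x; for each t ≥ 0 the maps T(t,·) and S(t,·) are Borel measurable and 2π-equivariant, i.e. T(t, x + 2π) = T(t,x) + 2π and S(t, x + 2π) = S(t,x) + 2π for all x; and for every x ∈ ℝ the maps t ↦ T(t,x) and t ↦ S(t,x) are differentiable with ∂ₜT(t,x) = ∫ h_β′(T(t,x) − T(t,y)) dμ₀(y) and ∂ₜS(t,x) = ∫ h_β′(S(t,x) − S(t,y)) dν₀(y). Then for every t ≥ 0, W₁(T(t,·)₊μ₀, S(t,·)₊ν₀) ≤ e^{2·C_β·t} · W₁(μ₀, ν₀), where T(t,·)₊μ₀ denotes the pushforward measure of μ₀ under T(t,·). (Dobrushin's stability estimate for the mean-field transformer dynamics on the circle, in Lagrangian form.) -/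
open MeasureTheory Real Filter

/-- The interaction kernel `h_β(θ) = β⁻¹ exp(β cos θ)`. -/
noncomputable def hBeta (β : ℝ) : ℝ → ℝ := fun θ => β⁻¹ * Real.exp (β * Real.cos θ)

/-- Its derivative `h_β′`. -/
noncomputable def hBeta' (β : ℝ) : ℝ → ℝ := deriv (hBeta β)

/-- `C_β = sup_θ |h_β″(θ)|`. -/
noncomputable def CBeta (β : ℝ) : ℝ := ⨆ θ : ℝ, |deriv (hBeta' β) θ|

/-- Periodic Kantorovich–Rubinstein distance: sup over 2π-periodic 1-Lipschitz test functions. -/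
noncomputable def W1 (μ ν : Measure ℝ) : ℝ :=
  ⨆ f : {f : ℝ → ℝ // Function.Periodic f (2 * π) ∧ LipschitzWith 1 f},
    (∫ x, f.1 x ∂μ) - ∫ x, f.1 x ∂ν

/-!
Couple the two dynamics through the identity coupling of `μ₀` and follow the gap
`D(t) = ∫ |T(t,x) - S(t,x)| dμ₀(x)`. With `C = C_β`, Gronwall makes `S(t,·)` `e^{Ct}`-Lipschitz;
being also 2π-equivariant, it moves `μ₀` and `ν₀` to measures at distance at most
`e^{Ct} W₁(μ₀, ν₀)`, so `W₁(T(t)₊μ₀, S(t)₊ν₀) ≤ D(t) + e^{Ct} W₁(μ₀, ν₀)`. Passing from the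
velocity of `T` to that of `S` through the intermediate configuration `(S(t), μ₀)`, the Lipschitz
bound on `h_β′` gives `D' ≤ 2C D + C e^{Ct} W₁(μ₀, ν₀)`, hence `G = D + e^{Ct} W₁(μ₀, ν₀)`
satisfies `G' ≤ 2C G`, `G(0) = W₁(μ₀, ν₀)`. As `D` need not be differentiable, these derivative
bounds are proved as bounds on forward difference quotients with an `O(z - s)` error, which is all
Gronwall's lemma needs.
-/

open Set NNReal Topology

lemma abs_sub_le_of_hasDerivWithinAt_Ici {f f' : ℝ → ℝ} {B s z : ℝ} (hs : 0 ≤ s) (hsz : s ≤ z)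
    (hf : ∀ r, 0 ≤ r → HasDerivWithinAt f (f' r) (Ici 0) r) (hB : ∀ r ∈ Icc s z, |f' r| ≤ B) :
    |f z - f s| ≤ B * (z - s) := by
  have hsub : Icc s z ⊆ Ici 0 := fun r hr => hs.trans hr.1
  have := (convex_Icc s z).norm_image_sub_le_of_norm_hasDerivWithin_le
    (fun r hr => (hf r (hsub hr)).mono hsub) hB (left_mem_Icc.2 hsz) (right_mem_Icc.2 hsz)
  rwa [Real.norm_eq_abs, Real.norm_eq_abs, abs_of_nonneg (sub_nonneg.2 hsz)] at this

lemma le_mul_exp_of_slope_le {f : ℝ → ℝ} {g : ℝ → ℝ → ℝ} {K a b : ℝ} (hab : a ≤ b)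
    (hf : ContinuousOn f (Icc a b)) (hslope : ∀ s ∈ Ico a b, ∀ z, s < z → slope f s z ≤ g s z)
    (hg : ∀ s ∈ Ico a b, Tendsto (g s) (𝓝[>] s) (𝓝 (K * f s))) :
    f b ≤ f a * exp (K * (b - a)) := by
  have hdini : ∀ s ∈ Ico a b, ∀ r, K * f s < r →
      ∃ᶠ z in 𝓝[>] s, (z - s)⁻¹ * (f z - f s) < r := fun s hs r hr =>
    (((hg s hs).eventually (gt_mem_nhds hr)).and self_mem_nhdsWithin).frequently.mono
      fun z ⟨hgz, hz⟩ => (hslope s hs z hz).trans_lt hgz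
  have := le_gronwallBound_of_liminf_deriv_right_le hf hdini le_rfl (fun s _ => (add_zero _).ge)
    b (right_mem_Icc.2 hab)
  rwa [gronwallBound_ε0] at this

-- `0⁻¹ = 0`, so the kernel degenerates at `β = 0`.
lemma hBeta'_zero : hBeta' 0 = 0 := by
  have : hBeta 0 = fun _ => 0 := funext fun θ => by simp [hBeta]
  ext θ
  simp [hBeta', this]

lemma hasDerivAt_hBeta {β : ℝ} (hβ : β ≠ 0) (θ : ℝ) :
    HasDerivAt (hBeta β) (-sin θ * exp (β * cos θ)) θ :=
  ((((hasDerivAt_cos θ).const_mul β).exp).const_mul β⁻¹).congr_deriv (by field_simp)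

lemma hBeta'_eq {β : ℝ} (hβ : β ≠ 0) : hBeta' β = fun θ => -sin θ * exp (β * cos θ) :=
  funext fun θ => (hasDerivAt_hBeta hβ θ).deriv

lemma hasDerivAt_hBeta' {β : ℝ} (hβ : β ≠ 0) (θ : ℝ) :
    HasDerivAt (hBeta' β) ((β * sin θ ^ 2 - cos θ) * exp (β * cos θ)) θ := by
  rw [hBeta'_eq hβ]
  exact ((hasDerivAt_sin θ).fun_neg.fun_mul ((hasDerivAt_cos θ).const_mul β).exp).congr_deriv
    (by ring)

lemma exp_mul_cos_le_exp_abs (β θ : ℝ) : exp (β * cos θ) ≤ exp |β| := by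
  gcongr
  calc β * cos θ ≤ |β * cos θ| := le_abs_self _
    _ = |β| * |cos θ| := abs_mul _ _
    _ ≤ |β| := mul_le_of_le_one_right (abs_nonneg β) (abs_cos_le_one θ)

lemma abs_hBeta'_le (β θ : ℝ) : |hBeta' β θ| ≤ exp |β| := by
  rcases eq_or_ne β 0 with rfl | hβ
  · simp [hBeta'_zero]
  rw [hBeta'_eq hβ, abs_mul, abs_neg, abs_of_pos (exp_pos _)]
  exact (mul_le_mul (abs_sin_le_one θ) (exp_mul_cos_le_exp_abs β θ) (exp_nonneg _)
    zero_le_one).trans_eq (one_mul _)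

lemma abs_deriv_hBeta'_le (β θ : ℝ) : |deriv (hBeta' β) θ| ≤ (|β| + 1) * exp |β| := by
  rcases eq_or_ne β 0 with rfl | hβ
  · simp [hBeta'_zero]
  rw [(hasDerivAt_hBeta' hβ θ).deriv, abs_mul, abs_of_pos (exp_pos _)]
  refine mul_le_mul ?_ (exp_mul_cos_le_exp_abs β θ) (exp_nonneg _) (by positivity)
  calc |β * sin θ ^ 2 - cos θ| ≤ |β * sin θ ^ 2| + |cos θ| := abs_sub _ _
    _ = |β| * sin θ ^ 2 + |cos θ| := by rw [abs_mul, abs_of_nonneg (sq_nonneg (sin θ))]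
    _ ≤ |β| * 1 + 1 := by
        gcongr
        · exact sin_sq_le_one θ
        · exact abs_cos_le_one θ
    _ = |β| + 1 := by ring

lemma CBeta_nonneg (β : ℝ) : 0 ≤ CBeta β :=
  Real.iSup_nonneg fun _ => abs_nonneg _

lemma abs_deriv_hBeta'_le_CBeta (β θ : ℝ) : |deriv (hBeta' β) θ| ≤ CBeta β :=
  le_ciSup ⟨_, forall_mem_range.2 (abs_deriv_hBeta'_le β)⟩ θ

lemma lipschitzWith_hBeta' (β : ℝ) : LipschitzWith (CBeta β).toNNReal (hBeta' β) := by
  rcases eq_or_ne β 0 with rfl | hβ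
  · rw [hBeta'_zero]
    exact (LipschitzWith.const 0).weaken bot_le
  refine lipschitzWith_of_nnnorm_deriv_le (fun θ => (hasDerivAt_hBeta' hβ θ).differentiableAt)
    fun θ => ?_
  rw [← NNReal.coe_le_coe, coe_nnnorm, Real.coe_toNNReal _ (CBeta_nonneg β)]
  exact abs_deriv_hBeta'_le_CBeta β θ

lemma hBeta'_periodic (β : ℝ) : Function.Periodic (hBeta' β) (2 * π) := by
  rcases eq_or_ne β 0 with rfl | hβ
  · simp [hBeta'_zero, Function.Periodic]
  intro θ
  simp [hBeta'_eq hβ]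

section Wasserstein

lemma Function.Periodic.abs_sub_le_of_lipschitzWith {f : ℝ → ℝ} {c : ℝ} {K : ℝ≥0}
    (hp : Function.Periodic f c) (hc : 0 < c) (hf : LipschitzWith K f) (x y : ℝ) :
    |f x - f y| ≤ K * c := by
  obtain ⟨x', hx', hfx⟩ := hp.exists_mem_Ico hc x y
  rw [hfx, ← Real.dist_eq]
  refine (hf.dist_le_mul x' y).trans (mul_le_mul_of_nonneg_left ?_ K.2)
  rw [Real.dist_eq, abs_of_nonneg (by linarith [hx'.1])]
  linarith [hx'.2]

lemma Function.Periodic.integrable_comp {f X : ℝ → ℝ} {c : ℝ} {K : ℝ≥0}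
    {μ : Measure ℝ} [IsFiniteMeasure μ] (hp : Function.Periodic f c) (hc : 0 < c)
    (hf : LipschitzWith K f) (hX : AEMeasurable X μ) : Integrable (fun x => f (X x)) μ :=
  Integrable.of_bound (hf.continuous.comp_aestronglyMeasurable hX.aestronglyMeasurable)
    (|f 0| + K * c) <| ae_of_all _ fun x => by
      have := hp.abs_sub_le_of_lipschitzWith hc hf (X x) 0
      rw [Real.norm_eq_abs]
      linarith [abs_sub_abs_le_abs_sub (f (X x)) (f 0)]

lemma abs_integral_sub_le_two_pi {f : ℝ → ℝ} (hp : Function.Periodic f (2 * π))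
    (hf : LipschitzWith 1 f) (μ : Measure ℝ) [IsProbabilityMeasure μ] :
    |∫ x, f x ∂μ - f 0| ≤ 2 * π := by
  have hint : Integrable f μ := hp.integrable_comp two_pi_pos hf aemeasurable_id
  have key := norm_integral_le_of_norm_le_const (μ := μ) (f := fun x => f x - f 0) (C := 2 * π) <|
    ae_of_all _ fun x => by simpa using hp.abs_sub_le_of_lipschitzWith two_pi_pos hf x 0
  rwa [integral_sub hint (integrable_const _), integral_const, probReal_univ, one_smul, mul_one,
    Real.norm_eq_abs] at key

lemma W1_bddAbove (μ ν : Measure ℝ) [IsProbabilityMeasure μ] [IsProbabilityMeasure ν] :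
    BddAbove (range fun f : {f : ℝ → ℝ // Function.Periodic f (2 * π) ∧ LipschitzWith 1 f} =>
      (∫ x, f.1 x ∂μ) - ∫ x, f.1 x ∂ν) := by
  refine ⟨4 * π, forall_mem_range.2 fun ⟨f, hp, hf⟩ => ?_⟩
  have hμ := abs_le.1 (abs_integral_sub_le_two_pi hp hf μ)
  have hν := abs_le.1 (abs_integral_sub_le_two_pi hp hf ν)
  dsimp only
  linarith [hμ.2, hν.1]

variable {μ ν : Measure ℝ} [IsProbabilityMeasure μ] [IsProbabilityMeasure ν]

lemma integral_sub_integral_le_W1 {f : ℝ → ℝ} (hp : Function.Periodic f (2 * π))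
    (hf : LipschitzWith 1 f) : (∫ x, f x ∂μ) - ∫ x, f x ∂ν ≤ W1 μ ν :=
  le_ciSup (W1_bddAbove μ ν) ⟨f, hp, hf⟩

lemma W1_nonneg : 0 ≤ W1 μ ν := by
  simpa using integral_sub_integral_le_W1 (μ := μ) (ν := ν) (f := fun _ => 0) (fun _ => rfl)
    ((LipschitzWith.const 0).weaken zero_le_one)

lemma integral_sub_integral_le_mul_W1 {f : ℝ → ℝ} {L : ℝ≥0} (hp : Function.Periodic f (2 * π))
    (hf : LipschitzWith L f) : (∫ x, f x ∂μ) - ∫ x, f x ∂ν ≤ L * W1 μ ν := by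
  rcases eq_or_ne L 0 with rfl | hL
  · have hconst : ∀ x, f x = f 0 := fun x => (LipschitzWith.zero_iff f).1 hf x 0
    simp [hconst]
  have hLpos : (0 : ℝ) < L := NNReal.coe_pos.2 (pos_iff_ne_zero.2 hL)
  have hscaled : LipschitzWith 1 fun x => (L : ℝ)⁻¹ * f x :=
    LipschitzWith.of_dist_le_mul fun a b => by
      rw [Real.dist_eq, ← mul_sub, abs_mul, abs_of_pos (inv_pos.2 hLpos), ← Real.dist_eq,
        NNReal.coe_one, one_mul, inv_mul_le_iff₀ hLpos]
      exact hf.dist_le_mul a b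
  have := integral_sub_integral_le_W1 (μ := μ) (ν := ν) (fun x => by simp [hp x]) hscaled
  rwa [integral_const_mul, integral_const_mul, ← mul_sub, inv_mul_le_iff₀ hLpos] at this

lemma abs_integral_sub_integral_le_mul_W1 {f : ℝ → ℝ} {L : ℝ≥0}
    (hp : Function.Periodic f (2 * π)) (hf : LipschitzWith L f) :
    |(∫ x, f x ∂μ) - ∫ x, f x ∂ν| ≤ L * W1 μ ν := by
  have hneg := integral_sub_integral_le_mul_W1 (μ := μ) (ν := ν) (fun x => by simp [hp x]) hf.neg
  rw [Pi.neg_def, integral_neg, integral_neg] at hneg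
  exact abs_le.2 ⟨by linarith, integral_sub_integral_le_mul_W1 hp hf⟩

lemma W1_map_le {X Y : ℝ → ℝ} {L : ℝ≥0} (hX : Measurable X) (hY : LipschitzWith L Y)
    (hYper : ∀ x, Y (x + 2 * π) = Y x + 2 * π) (hXY : Integrable (fun x => X x - Y x) μ) :
    W1 (μ.map X) (ν.map Y) ≤ ∫ x, |X x - Y x| ∂μ + L * W1 μ ν := by
  have : Nonempty {f : ℝ → ℝ // Function.Periodic f (2 * π) ∧ LipschitzWith 1 f} :=
    ⟨⟨fun _ => 0, fun _ => rfl, (LipschitzWith.const 0).weaken zero_le_one⟩⟩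
  refine ciSup_le fun ⟨f, hp, hf⟩ => ?_
  have hYmeas : Measurable Y := hY.continuous.measurable
  dsimp only
  rw [integral_map hX.aemeasurable hf.continuous.aestronglyMeasurable,
    integral_map hYmeas.aemeasurable hf.continuous.aestronglyMeasurable]
  have hfX := hp.integrable_comp two_pi_pos hf hX.aemeasurable (μ := μ)
  have hfY := hp.integrable_comp two_pi_pos hf hYmeas.aemeasurable (μ := μ)
  have hcoupling : ∫ x, f (X x) ∂μ - ∫ x, f (Y x) ∂μ ≤ ∫ x, |X x - Y x| ∂μ := by
    rw [← integral_sub hfX hfY]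
    refine integral_mono (hfX.sub hfY) hXY.abs fun x => ?_
    simpa [Real.dist_eq] using (le_abs_self _).trans (hf.dist_le_mul (X x) (Y x))
  have hshift : ∫ x, f (Y x) ∂μ - ∫ x, f (Y x) ∂ν ≤ L * W1 μ ν := by
    simpa using integral_sub_integral_le_mul_W1 (fun x => by simp [hYper, hp _]) (hf.comp hY)
  linarith

end Wasserstein

section MeanField

noncomputable def meanFieldVelocity (K : ℝ → ℝ) (μ : Measure ℝ) (X : ℝ → ℝ) (x : ℝ) : ℝ :=
  ∫ y, K (X x - X y) ∂μ

structure IsMeanFieldFlow (K : ℝ → ℝ) (μ : Measure ℝ) (T : ℝ → ℝ → ℝ) : Prop where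
  initial : ∀ x, T 0 x = x
  measurable : ∀ t, 0 ≤ t → Measurable (T t)
  hasDerivWithinAt : ∀ x t, 0 ≤ t →
    HasDerivWithinAt (fun s => T s x) (meanFieldVelocity K μ (T t) x) (Ici 0) t

variable {K : ℝ → ℝ} {C L : ℝ≥0} {M : ℝ} {μ ν : Measure ℝ} [IsProbabilityMeasure μ]
  [IsProbabilityMeasure ν] {X Y : ℝ → ℝ}

lemma abs_meanFieldVelocity_le (hKM : ∀ θ, |K θ| ≤ M) (X : ℝ → ℝ) (x : ℝ) :
    |meanFieldVelocity K μ X x| ≤ M := by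
  simpa [meanFieldVelocity] using norm_integral_le_of_norm_le_const (μ := μ)
    (f := fun y => K (X x - X y))
    (ae_of_all _ fun y => hKM (X x - X y))

lemma integrable_comp_const_sub (hK : LipschitzWith C K) (hKM : ∀ θ, |K θ| ≤ M)
    (hX : Measurable X) (z : ℝ) : Integrable (fun y => K (z - X y)) μ :=
  Integrable.of_bound (hK.continuous.measurable.comp (measurable_const.sub hX)).aestronglyMeasurable
    M (ae_of_all _ fun _ => hKM _)

lemma abs_meanFieldVelocity_sub_le (hK : LipschitzWith C K) (hKM : ∀ θ, |K θ| ≤ M)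
    (hX : Measurable X) (x x' : ℝ) :
    |meanFieldVelocity K μ X x - meanFieldVelocity K μ X x'| ≤ C * |X x - X x'| := by
  rw [meanFieldVelocity, meanFieldVelocity, ← integral_sub (integrable_comp_const_sub hK hKM hX _)
    (integrable_comp_const_sub hK hKM hX _)]
  simpa using norm_integral_le_of_norm_le_const (μ := μ)
    (f := fun y => K (X x - X y) - K (X x' - X y)) (C := C * |X x - X x'|) <|
    ae_of_all _ fun y => by simpa [Real.dist_eq] using hK.dist_le_mul (X x - X y) (X x' - X y)

lemma abs_meanFieldVelocity_config_sub_le (hK : LipschitzWith C K)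
    (hKM : ∀ θ, |K θ| ≤ M) (hX : Measurable X) (hY : Measurable Y)
    (hXY : Integrable (fun y => X y - Y y) μ) (x : ℝ) :
    |meanFieldVelocity K μ X x - meanFieldVelocity K μ Y x|
      ≤ C * (|X x - Y x| + ∫ y, |X y - Y y| ∂μ) := by
  rw [meanFieldVelocity, meanFieldVelocity, ← integral_sub (integrable_comp_const_sub hK hKM hX _)
    (integrable_comp_const_sub hK hKM hY _)]
  have hbound : Integrable (fun y => C * (|X x - Y x| + |X y - Y y|)) μ :=
    ((integrable_const _).add hXY.abs).const_mul _
  refine (norm_integral_le_of_norm_le (f := fun y => K (X x - X y) - K (Y x - Y y)) hbound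
    (ae_of_all _ fun y => ?_)).trans_eq ?_
  · rw [Real.norm_eq_abs, ← Real.dist_eq]
    refine (hK.dist_le_mul _ _).trans (mul_le_mul_of_nonneg_left ?_ C.2)
    rw [Real.dist_eq, show X x - X y - (Y x - Y y) = (X x - Y x) - (X y - Y y) by ring]
    exact abs_sub _ _
  · rw [integral_const_mul, integral_add (integrable_const _) hXY.abs, integral_const]
    simp

lemma abs_meanFieldVelocity_measure_sub_le_mul_W1 (hK : LipschitzWith C K)
    (hKper : Function.Periodic K (2 * π)) (hY : LipschitzWith L Y)
    (hYper : ∀ x, Y (x + 2 * π) = Y x + 2 * π) (x : ℝ) :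
    |meanFieldVelocity K μ Y x - meanFieldVelocity K ν Y x| ≤ C * L * W1 μ ν := by
  have hper : Function.Periodic (fun y => K (Y x - Y y)) (2 * π) := fun y => by
    simp only [hYper, ← sub_sub, hKper.sub_eq]
  have hlip : LipschitzWith L fun y => Y x - Y y :=
    LipschitzWith.of_dist_le_mul fun a b => by
      rw [dist_sub_left]
      exact hY.dist_le_mul a b
  simpa [meanFieldVelocity] using abs_integral_sub_integral_le_mul_W1 hper (hK.comp hlip)

lemma abs_meanFieldVelocity_sub_meanFieldVelocity_le (hK : LipschitzWith C K)
    (hKM : ∀ θ, |K θ| ≤ M) (hKper : Function.Periodic K (2 * π)) (hX : Measurable X)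
    (hY : LipschitzWith L Y) (hYper : ∀ x, Y (x + 2 * π) = Y x + 2 * π)
    (hXY : Integrable (fun y => X y - Y y) μ) (x : ℝ) :
    |meanFieldVelocity K μ X x - meanFieldVelocity K ν Y x|
      ≤ C * (|X x - Y x| + ∫ y, |X y - Y y| ∂μ + L * W1 μ ν) := by
  have h₁ := abs_meanFieldVelocity_config_sub_le hK hKM hX hY.continuous.measurable hXY x
  have h₂ := abs_meanFieldVelocity_measure_sub_le_mul_W1 (μ := μ) (ν := ν) hK hKper hY hYper x
  calc _ ≤ _ := abs_sub_le _ (meanFieldVelocity K μ Y x) _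
    _ ≤ _ := add_le_add h₁ h₂
    _ = _ := by ring

end MeanField

section Flows

variable {K : ℝ → ℝ} {C : ℝ≥0} {M : ℝ} {μ ν : Measure ℝ} [IsProbabilityMeasure μ]
  [IsProbabilityMeasure ν] {T S : ℝ → ℝ → ℝ} {s t z : ℝ}

lemma IsMeanFieldFlow.abs_sub_le (hT : IsMeanFieldFlow K μ T) (hKM : ∀ θ, |K θ| ≤ M) (x : ℝ)
    (hs : 0 ≤ s) (hsz : s ≤ z) : |T z x - T s x| ≤ M * (z - s) :=
  abs_sub_le_of_hasDerivWithinAt_Ici hs hsz (hT.hasDerivWithinAt x) fun _ _ =>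
    abs_meanFieldVelocity_le hKM _ _

lemma IsMeanFieldFlow.lipschitzWith (hT : IsMeanFieldFlow K μ T) (hK : LipschitzWith C K)
    (hKM : ∀ θ, |K θ| ≤ M) (ht : 0 ≤ t) : LipschitzWith (exp (C * t)).toNNReal (T t) := by
  refine LipschitzWith.of_dist_le' fun x y => ?_
  have hderiv r (hr : 0 ≤ r) := (hT.hasDerivWithinAt x r hr).sub (hT.hasDerivWithinAt y r hr)
  have := norm_le_gronwallBound_of_norm_deriv_right_le (f := fun r => T r x - T r y)
    (δ := dist x y) (ε := 0) (a := 0) (b := t)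
    (fun r hr => (hderiv r hr.1).continuousWithinAt.mono Icc_subset_Ici_self)
    (fun r hr => (hderiv r hr.1).mono (Ici_subset_Ici.2 hr.1))
    (by simp [hT.initial, Real.dist_eq])
    (fun r hr => by simpa using abs_meanFieldVelocity_sub_le hK hKM (hT.measurable r hr.1) x y)
    t (right_mem_Icc.2 ht)
  rwa [gronwallBound_ε0, sub_zero, mul_comm, ← dist_eq_norm] at this

lemma abs_flow_gap_sub_le (hT : IsMeanFieldFlow K μ T) (hS : IsMeanFieldFlow K ν S)
    (hKM : ∀ θ, |K θ| ≤ M) (x : ℝ) (hs : 0 ≤ s) (hsz : s ≤ z) :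
    |(T z x - S z x) - (T s x - S s x)| ≤ 2 * M * (z - s) := by
  rw [show (T z x - S z x) - (T s x - S s x) = (T z x - T s x) - (S z x - S s x) by ring]
  linarith [abs_sub (T z x - T s x) (S z x - S s x), hT.abs_sub_le hKM x hs hsz,
    hS.abs_sub_le hKM x hs hsz]

lemma integrable_flow_gap (hT : IsMeanFieldFlow K μ T) (hS : IsMeanFieldFlow K ν S)
    (hKM : ∀ θ, |K θ| ≤ M) (ht : 0 ≤ t) : Integrable (fun x => T t x - S t x) μ :=
  Integrable.of_bound ((hT.measurable t ht).sub (hS.measurable t ht)).aestronglyMeasurable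
    (2 * M * t) <| ae_of_all _ fun x => by
      simpa [hT.initial, hS.initial] using abs_flow_gap_sub_le hT hS hKM x le_rfl ht

lemma abs_integral_abs_flow_gap_sub_le (hT : IsMeanFieldFlow K μ T)
    (hS : IsMeanFieldFlow K ν S) (hKM : ∀ θ, |K θ| ≤ M) (hs : 0 ≤ s) (hsz : s ≤ z) :
    |∫ x, |T z x - S z x| ∂μ - ∫ x, |T s x - S s x| ∂μ| ≤ 2 * M * (z - s) := by
  rw [← integral_sub (integrable_flow_gap hT hS hKM (hs.trans hsz)).abs
    (integrable_flow_gap hT hS hKM hs).abs]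
  simpa using norm_integral_le_of_norm_le_const (μ := μ)
    (f := fun x => |T z x - S z x| - |T s x - S s x|) <| ae_of_all _ fun x =>
      (abs_abs_sub_abs_le_abs_sub _ _).trans (abs_flow_gap_sub_le hT hS hKM x hs hsz)

lemma continuousOn_integral_abs_flow_gap (hT : IsMeanFieldFlow K μ T)
    (hS : IsMeanFieldFlow K ν S) (hKM : ∀ θ, |K θ| ≤ M) :
    ContinuousOn (fun t => ∫ x, |T t x - S t x| ∂μ) (Ici 0) := by
  refine (LipschitzOnWith.of_dist_le' (K := 2 * M) fun a ha b hb => ?_).continuousOn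
  rcases le_total a b with hab | hab
  · rw [dist_comm, Real.dist_eq, dist_comm, Real.dist_eq, abs_of_nonneg (sub_nonneg.2 hab)]
    exact abs_integral_abs_flow_gap_sub_le hT hS hKM ha hab
  · rw [Real.dist_eq, Real.dist_eq, abs_of_nonneg (sub_nonneg.2 hab)]
    exact abs_integral_abs_flow_gap_sub_le hT hS hKM hb hab

variable {r : ℝ}

lemma abs_velocity_gap_le (hT : IsMeanFieldFlow K μ T) (hS : IsMeanFieldFlow K ν S)
    (hK : LipschitzWith C K) (hKM : ∀ θ, |K θ| ≤ M) (hKper : Function.Periodic K (2 * π))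
    (hSper : ∀ t, 0 ≤ t → ∀ x, S t (x + 2 * π) = S t x + 2 * π) (hr : 0 ≤ r) (x : ℝ) :
    |meanFieldVelocity K μ (T r) x - meanFieldVelocity K ν (S r) x|
      ≤ C * (|T r x - S r x| + ∫ y, |T r y - S r y| ∂μ + exp (C * r) * W1 μ ν) := by
  simpa [Real.coe_toNNReal _ (exp_pos _).le] using
    abs_meanFieldVelocity_sub_meanFieldVelocity_le hK hKM hKper (hT.measurable r hr)
      (hS.lipschitzWith hK hKM hr) (hSper r hr) (integrable_flow_gap hT hS hKM hr) x

lemma abs_flow_gap_le_of_le (hT : IsMeanFieldFlow K μ T) (hS : IsMeanFieldFlow K ν S)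
    (hK : LipschitzWith C K) (hKM : ∀ θ, |K θ| ≤ M) (hKper : Function.Periodic K (2 * π))
    (hSper : ∀ t, 0 ≤ t → ∀ x, S t (x + 2 * π) = S t x + 2 * π) (hs : 0 ≤ s) (hsz : s ≤ z)
    (x : ℝ) :
    |T z x - S z x| ≤ |T s x - S s x| + (z - s) * (C * (|T s x - S s x|
      + ∫ y, |T s y - S s y| ∂μ + 4 * M * (z - s) + exp (C * z) * W1 μ ν)) := by
  have hM : 0 ≤ M := (abs_nonneg _).trans (hKM 0)
  have hB : ∀ r ∈ Icc s z, |meanFieldVelocity K μ (T r) x - meanFieldVelocity K ν (S r) x|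
      ≤ C * (|T s x - S s x| + ∫ y, |T s y - S s y| ∂μ + 4 * M * (z - s)
        + exp (C * z) * W1 μ ν) := fun r hr => by
    have hpoint := abs_flow_gap_sub_le hT hS hKM x hs hr.1
    have hmean := abs_integral_abs_flow_gap_sub_le hT hS hKM hs hr.1
    have hexp : exp (C * r) * W1 μ ν ≤ exp (C * z) * W1 μ ν := by
      gcongr
      exacts [W1_nonneg, hr.2]
    refine (abs_velocity_gap_le hT hS hK hKM hKper hSper (hs.trans hr.1) x).trans
      (mul_le_mul_of_nonneg_left ?_ C.2)
    linarith [abs_sub_abs_le_abs_sub (T r x - S r x) (T s x - S s x), abs_le.1 hmean,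
      mul_nonneg hM (sub_nonneg.2 hr.2)]
  have := abs_sub_le_of_hasDerivWithinAt_Ici hs hsz
    (fun r hr => (hT.hasDerivWithinAt x r hr).fun_sub (hS.hasDerivWithinAt x r hr)) hB
  linarith [abs_sub_abs_le_abs_sub (T z x - S z x) (T s x - S s x)]

lemma integral_abs_flow_gap_le_of_le (hT : IsMeanFieldFlow K μ T) (hS : IsMeanFieldFlow K ν S)
    (hK : LipschitzWith C K) (hKM : ∀ θ, |K θ| ≤ M) (hKper : Function.Periodic K (2 * π))
    (hSper : ∀ t, 0 ≤ t → ∀ x, S t (x + 2 * π) = S t x + 2 * π) (hs : 0 ≤ s) (hsz : s ≤ z) :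
    ∫ x, |T z x - S z x| ∂μ ≤ ∫ x, |T s x - S s x| ∂μ + (z - s) * (C *
      (2 * ∫ x, |T s x - S s x| ∂μ + 4 * M * (z - s) + exp (C * z) * W1 μ ν)) := by
  set D := ∫ x, |T s x - S s x| ∂μ
  set c := (z - s) * C * (D + 4 * M * (z - s) + exp (C * z) * W1 μ ν)
  have hint := (integrable_flow_gap hT hS hKM hs).abs
  calc ∫ x, |T z x - S z x| ∂μ ≤ ∫ x, ((1 + (z - s) * C) * |T s x - S s x| + c) ∂μ :=
        integral_mono (integrable_flow_gap hT hS hKM (hs.trans hsz)).abs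
          ((hint.const_mul _).add (integrable_const _)) fun x =>
            (abs_flow_gap_le_of_le hT hS hK hKM hKper hSper hs hsz x).trans_eq (by ring)
    _ = _ := by
      rw [integral_add (hint.const_mul _) (integrable_const _), integral_const_mul, integral_const]
      simp only [probReal_univ, one_smul, c]
      ring

lemma integral_abs_flow_gap_add_le (hT : IsMeanFieldFlow K μ T) (hS : IsMeanFieldFlow K ν S)
    (hK : LipschitzWith C K) (hKM : ∀ θ, |K θ| ≤ M) (hKper : Function.Periodic K (2 * π))
    (hSper : ∀ t, 0 ≤ t → ∀ x, S t (x + 2 * π) = S t x + 2 * π) (ht : 0 ≤ t) :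
    ∫ x, |T t x - S t x| ∂μ + exp (C * t) * W1 μ ν ≤ exp (2 * C * t) * W1 μ ν := by
  set w := W1 μ ν
  set D := fun s => ∫ x, |T s x - S s x| ∂μ
  have hslope : ∀ s ∈ Ico 0 t, ∀ z, s < z → slope (fun s => D s + exp (C * s) * w) s z ≤
      C * (2 * D s + 4 * M * (z - s) + exp (C * z) * w) + w * slope (fun r => exp (C * r)) s z := by
    intro s hs z hz
    have hzs : 0 < z - s := sub_pos.2 hz
    have hstep := integral_abs_flow_gap_le_of_le hT hS hK hKM hKper hSper hs.1 hz.le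
    rw [slope_def_field, slope_def_field, show D z + exp (C * z) * w - (D s + exp (C * s) * w)
      = (D z - D s) + w * (exp (C * z) - exp (C * s)) by ring, add_div, mul_div_assoc]
    refine add_le_add_left ?_ _
    rw [div_le_iff₀ hzs]
    linarith
  have hlim : ∀ s ∈ Ico 0 t, Tendsto (fun z => C * (2 * D s + 4 * M * (z - s) + exp (C * z) * w)
      + w * slope (fun r => exp (C * r)) s z) (𝓝[>] s) (𝓝 (2 * C * (D s + exp (C * s) * w))) := by
    intro s _
    have hexp : HasDerivAt (fun r => exp (C * r)) (C * exp (C * s)) s := by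
      simpa [mul_comm] using ((hasDerivAt_id s).const_mul (C : ℝ)).exp
    have hdiff := (hasDerivAt_iff_tendsto_slope.1 hexp).mono_left
      (nhdsWithin_mono s (show Ioi s ⊆ {s}ᶜ from fun _ hz => ne_of_gt hz))
    have hcont : Continuous fun z => C * (2 * D s + 4 * M * (z - s) + exp (C * z) * w) := by
      fun_prop
    convert ((hcont.tendsto s).mono_left nhdsWithin_le_nhds).add (hdiff.const_mul w) using 2
    ring
  have := le_mul_exp_of_slope_le ht
    (((continuousOn_integral_abs_flow_gap hT hS hKM).mono Icc_subset_Ici_self).add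
      (by fun_prop)) hslope hlim
  simpa [D, hT.initial, hS.initial, mul_comm w] using this

end Flows

theorem dobrushin_lagrangian_general (β : ℝ)
    (μ₀ ν₀ : Measure ℝ) [IsProbabilityMeasure μ₀] [IsProbabilityMeasure ν₀]
    (T S : ℝ → ℝ → ℝ)
    (hT0 : ∀ x, T 0 x = x) (hS0 : ∀ x, S 0 x = x)
    (hTmeas : ∀ t, 0 ≤ t → Measurable (T t))
    (hSmeas : ∀ t, 0 ≤ t → Measurable (S t))
    (hSper : ∀ t, 0 ≤ t → ∀ x, S t (x + 2 * π) = S t x + 2 * π)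
    (hTode : ∀ x : ℝ, ∀ t, 0 ≤ t →
      HasDerivWithinAt (fun s => T s x)
        (∫ y, hBeta' β (T t x - T t y) ∂μ₀) (Set.Ici 0) t)
    (hSode : ∀ x : ℝ, ∀ t, 0 ≤ t →
      HasDerivWithinAt (fun s => S s x)
        (∫ y, hBeta' β (S t x - S t y) ∂ν₀) (Set.Ici 0) t)
    (t : ℝ) (ht : 0 ≤ t) :
    W1 (μ₀.map (T t)) (ν₀.map (S t)) ≤ Real.exp (2 * CBeta β * t) * W1 μ₀ ν₀ := by
  have hT : IsMeanFieldFlow (hBeta' β) μ₀ T := ⟨hT0, hTmeas, hTode⟩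
  have hS : IsMeanFieldFlow (hBeta' β) ν₀ S := ⟨hS0, hSmeas, hSode⟩
  have hK := lipschitzWith_hBeta' β
  have hKM := abs_hBeta'_le β
  have hC : ((CBeta β).toNNReal : ℝ) = CBeta β := Real.coe_toNNReal _ (CBeta_nonneg β)
  calc W1 (μ₀.map (T t)) (ν₀.map (S t))
      ≤ ∫ x, |T t x - S t x| ∂μ₀ + exp (CBeta β * t) * W1 μ₀ ν₀ := by
        simpa [hC, Real.coe_toNNReal _ (exp_pos _).le] using
          W1_map_le (hTmeas t ht) (hS.lipschitzWith hK hKM ht) (hSper t ht)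
            (integrable_flow_gap hT hS hKM ht)
    _ ≤ exp (2 * CBeta β * t) * W1 μ₀ ν₀ := by
        simpa [hC] using integral_abs_flow_gap_add_le hT hS hK hKM (hBeta'_periodic β) hSper ht

/-- Dobrushin's stability estimate for the mean-field transformer dynamics on the circle,
in Lagrangian form. -/
theorem dobrushin_lagrangian (β : ℝ) (hβpos : 0 < β)
    (μ₀ ν₀ : Measure ℝ) [IsProbabilityMeasure μ₀] [IsProbabilityMeasure ν₀]
    (T S : ℝ → ℝ → ℝ)
    (hT0 : ∀ x, T 0 x = x) (hS0 : ∀ x, S 0 x = x)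
    (hTmeas : ∀ t, 0 ≤ t → Measurable (T t))
    (hSmeas : ∀ t, 0 ≤ t → Measurable (S t))
    (hTper : ∀ t, 0 ≤ t → ∀ x, T t (x + 2 * π) = T t x + 2 * π)
    (hSper : ∀ t, 0 ≤ t → ∀ x, S t (x + 2 * π) = S t x + 2 * π)
    (hTode : ∀ x : ℝ, ∀ t, 0 ≤ t →
      HasDerivWithinAt (fun s => T s x)
        (∫ y, hBeta' β (T t x - T t y) ∂μ₀) (Set.Ici 0) t)
    (hSode : ∀ x : ℝ, ∀ t, 0 ≤ t →
      HasDerivWithinAt (fun s => S s x)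
        (∫ y, hBeta' β (S t x - S t y) ∂ν₀) (Set.Ici 0) t)
    (t : ℝ) (ht : 0 ≤ t) :
    W1 (μ₀.map (T t)) (ν₀.map (S t)) ≤ Real.exp (2 * CBeta β * t) * W1 μ₀ ν₀ :=
  dobrushin_lagrangian_general β μ₀ ν₀ T S hT0 hS0 hTmeas hSmeas hSper hTode hSode t ht
end

section
/- For every integer n ≥ 1 there exists a constant C_n > 0 such that for all smooth 2π-periodic functions f, g : ℝ → ℝ, Σ_{k=0}^{n} ∫₀^{2π} (d/dθ)^k ( f(θ)·g′(θ) ) · g^{(k)}(θ) dθ ≤ C_n · ( max_{0≤j≤n} sup_{θ∈ℝ} |f^{(j)}(θ)| ) · Σ_{k=0}^{n} ∫₀^{2π} ( g^{(k)}(θ) )² dθ, where g^{(k)} denotes the k-th derivative. (Key commutator/integration-by-parts estimate: the H^n inner product ⟨f·∂g, g⟩_{H^n} is bounded by C_n·‖f‖_{W^{n,∞}}·‖g‖²_{H^n}.) -/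
open Real Filter intervalIntegral

private lemma leibniz_iter {u v : ℝ → ℝ} (hu : ContDiff ℝ (⊤ : ℕ∞) u)
    (hv : ContDiff ℝ (⊤ : ℕ∞) v) (k : ℕ) (x : ℝ) :
    deriv^[k] (fun y => u y * v y) x
      = ∑ i ∈ Finset.range (k + 1),
          (k.choose i : ℝ) * (deriv^[i] u x * deriv^[k - i] v x) := by
  induction k generalizing x with
  | zero => simp
  | succ k ih =>
    have hdu : ∀ (i : ℕ) (x : ℝ), DifferentiableAt ℝ (deriv^[i] u) x := fun i x =>
      ((hu.iterate_deriv i).differentiable (by simp)).differentiableAt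
    have hdv : ∀ (i : ℕ) (x : ℝ), DifferentiableAt ℝ (deriv^[i] v) x := fun i x =>
      ((hv.iterate_deriv i).differentiable (by simp)).differentiableAt
    have hsum : deriv^[k] (fun y => u y * v y)
        = fun x => ∑ i ∈ Finset.range (k + 1),
            (k.choose i : ℝ) * (deriv^[i] u x * deriv^[k - i] v x) := funext fun x => ih x
    rw [Function.iterate_succ_apply', hsum]
    rw [deriv_fun_sum (fun i _ => (((hdu i x).fun_mul (hdv _ x)).const_mul _))]
    have step : ∀ i ∈ Finset.range (k + 1),
        deriv (fun y => (k.choose i : ℝ) * (deriv^[i] u y * deriv^[k - i] v y)) x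
          = (k.choose i : ℝ) * (deriv^[i + 1] u x * deriv^[k - i] v x)
            + (k.choose i : ℝ) * (deriv^[i] u x * deriv^[k + 1 - i] v x) := by
      intro i hi
      have hik : i ≤ k := Nat.lt_succ_iff.mp (Finset.mem_range.mp hi)
      have h1 : k - i + 1 = k + 1 - i := by omega
      rw [deriv_const_mul _ ((hdu i x).fun_mul (hdv _ x)), deriv_fun_mul (hdu i x) (hdv _ x),
        ← Function.iterate_succ_apply' deriv i, ← Function.iterate_succ_apply' deriv (k - i)]
      simp only [Nat.succ_eq_add_one, h1]
      ring
    rw [Finset.sum_congr rfl step, Finset.sum_add_distrib]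
    rw [Finset.sum_range_succ' (fun i => ((k+1).choose i : ℝ) * (deriv^[i] u x * deriv^[k + 1 - i] v x)) (k + 1)]
    have hF : ∀ i ∈ Finset.range (k + 1),
        (((k+1).choose (i+1) : ℝ)) * (deriv^[i+1] u x * deriv^[k + 1 - (i+1)] v x)
          = (k.choose i : ℝ) * (deriv^[i + 1] u x * deriv^[k - i] v x)
            + (k.choose (i+1) : ℝ) * (deriv^[i+1] u x * deriv^[k - i] v x) := by
      intro i hi
      have h2 : k + 1 - (i + 1) = k - i := by omega
      rw [h2, Nat.choose_succ_succ]
      push_cast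
      ring
    rw [Finset.sum_congr rfl hF, Finset.sum_add_distrib]
    have hS2 : ∑ i ∈ Finset.range (k + 1),
          (k.choose i : ℝ) * (deriv^[i] u x * deriv^[k + 1 - i] v x)
        = ∑ i ∈ Finset.range (k + 1),
            (k.choose (i+1) : ℝ) * (deriv^[i+1] u x * deriv^[k - i] v x)
          + ((k+1).choose 0 : ℝ) * (deriv^[0] u x * deriv^[k + 1 - 0] v x) := by
      rw [Finset.sum_range_succ' (fun i => (k.choose i : ℝ) * (deriv^[i] u x * deriv^[k + 1 - i] v x)) k]
      rw [Finset.sum_range_succ (fun i => (k.choose (i+1) : ℝ) * (deriv^[i+1] u x * deriv^[k - i] v x)) k]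
      simp only [Nat.choose_succ_self, Nat.cast_zero, zero_mul, add_zero, Nat.choose_zero_right]
      congr 1
      apply Finset.sum_congr rfl
      intro i hi
      have : k + 1 - (i + 1) = k - i := by omega
      rw [this]
    rw [hS2]
    ring

private lemma ibp_periodic {f w : ℝ → ℝ} (hf : ContDiff ℝ (⊤ : ℕ∞) f)
    (hw : ContDiff ℝ (⊤ : ℕ∞) w) (hfp : f (2 * π) = f 0) (hwp : w (2 * π) = w 0) :
    ∫ θ in (0:ℝ)..(2 * π), f θ * (deriv w θ * w θ)
      = -(1/2) * ∫ θ in (0:ℝ)..(2 * π), deriv f θ * (w θ) ^ 2 := by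
  have cf : Continuous f := hf.continuous
  have cw : Continuous w := hw.continuous
  have cf' : Continuous (deriv f) := hf.continuous_deriv (by simp)
  have cw' : Continuous (deriv w) := hw.continuous_deriv (by simp)
  have hdf : ∀ x, HasDerivAt f (deriv f x) x :=
    fun x => ((hf.differentiable (by simp)) x).hasDerivAt
  have hdw : ∀ x, HasDerivAt (fun θ => (w θ) ^ 2) (2 * w x * deriv w x) x := by
    intro x
    have := (((hw.differentiable (by simp)) x).hasDerivAt).pow 2
    simp at this; exact this
  have key := integral_deriv_mul_eq_sub_of_hasDerivAt (u := f) (v := fun θ => (w θ) ^ 2)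
    (u' := deriv f) (v' := fun x => 2 * w x * deriv w x) (a := 0) (b := 2 * π)
    cf.continuousOn (by fun_prop) (fun x _ => hdf x) (fun x _ => hdw x)
    (cf'.intervalIntegrable _ _) (Continuous.intervalIntegrable (by fun_prop) _ _)
  rw [hfp, hwp, sub_self] at key
  rw [intervalIntegral.integral_add (f := fun x => deriv f x * w x ^ 2) ((cf'.mul (cw.pow 2)).intervalIntegrable _ _)
    (Continuous.intervalIntegrable (by fun_prop) _ _)] at key
  have h2 : (∫ θ in (0:ℝ)..(2 * π), f θ * (2 * w θ * deriv w θ))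
      = 2 * ∫ θ in (0:ℝ)..(2 * π), f θ * (deriv w θ * w θ) := by
    rw [← intervalIntegral.integral_const_mul]
    apply intervalIntegral.integral_congr
    intro x _
    ring
  rw [h2] at key
  linarith

private lemma integral_triple_bound {φ a b : ℝ → ℝ} (hφ : Continuous φ)
    (ha : Continuous a) (hb : Continuous b) {M : ℝ} (hM : ∀ θ, |φ θ| ≤ M) :
    ∫ θ in (0:ℝ)..(2 * π), φ θ * a θ * b θ
      ≤ M / 2 * ((∫ θ in (0:ℝ)..(2 * π), a θ ^ 2) + ∫ θ in (0:ℝ)..(2 * π), b θ ^ 2) := by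
  have hM0 : 0 ≤ M := (abs_nonneg _).trans (hM 0)
  have hpt : ∀ θ, φ θ * a θ * b θ ≤ M / 2 * (a θ ^ 2 + b θ ^ 2) := by
    intro θ
    have h1 : φ θ * a θ * b θ ≤ |φ θ| * |a θ * b θ| := by
      rw [← abs_mul, mul_assoc]
      exact le_abs_self _
    have h2 : |a θ * b θ| ≤ (a θ ^ 2 + b θ ^ 2) / 2 := by
      rw [abs_mul]
      nlinarith [sq_nonneg (|a θ| - |b θ|), sq_abs (a θ), sq_abs (b θ)]
    have h3 : |φ θ| * |a θ * b θ| ≤ M * ((a θ ^ 2 + b θ ^ 2) / 2) :=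
      mul_le_mul (hM θ) h2 (abs_nonneg _) hM0
    calc φ θ * a θ * b θ ≤ |φ θ| * |a θ * b θ| := h1
      _ ≤ M * ((a θ ^ 2 + b θ ^ 2) / 2) := h3
      _ = M / 2 * (a θ ^ 2 + b θ ^ 2) := by ring
  have hle : (∫ θ in (0:ℝ)..(2 * π), φ θ * a θ * b θ)
      ≤ ∫ θ in (0:ℝ)..(2 * π), M / 2 * (a θ ^ 2 + b θ ^ 2) := by
    apply intervalIntegral.integral_mono_on (by positivity)
      (Continuous.intervalIntegrable (by fun_prop) _ _)
      (Continuous.intervalIntegrable (by fun_prop) _ _)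
    exact fun x _ => hpt x
  rw [intervalIntegral.integral_const_mul, intervalIntegral.integral_add (f := fun x => a x ^ 2) (g := fun x => b x ^ 2)
    ((ha.pow 2).intervalIntegrable _ _) ((hb.pow 2).intervalIntegrable _ _)] at hle
  exact hle

/-- Key commutator/integration-by-parts estimate: the `Hⁿ` inner product `⟨f·∂g, g⟩_{Hⁿ}`
is bounded by `Cₙ·‖f‖_{W^{n,∞}}·‖g‖²_{Hⁿ}` for smooth 2π-periodic functions. -/
theorem commutator_estimate (n : ℕ) (hn : 1 ≤ n) :
    ∃ C : ℝ, 0 < C ∧ ∀ f g : ℝ → ℝ,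
      ContDiff ℝ (⊤ : ℕ∞) f → Function.Periodic f (2 * π) →
      ContDiff ℝ (⊤ : ℕ∞) g → Function.Periodic g (2 * π) →
      ∑ k ∈ Finset.range (n + 1),
          ∫ θ in (0:ℝ)..(2 * π), deriv^[k] (fun θ => f θ * deriv g θ) θ * deriv^[k] g θ
        ≤ C * (⨆ j : Fin (n + 1), ⨆ θ : ℝ, |deriv^[(j : ℕ)] f θ|) *
            ∑ k ∈ Finset.range (n + 1), ∫ θ in (0:ℝ)..(2 * π), (deriv^[k] g θ) ^ 2 := by
  refine ⟨2 ^ (n + 1), by positivity, ?_⟩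
  intro f g hfc hfp hgc hgp
  have hf : ContDiff ℝ (⊤ : ℕ∞) f := hfc.of_le (by simp)
  have hg : ContDiff ℝ (⊤ : ℕ∞) g := hgc.of_le (by simp)
  have hg' : ContDiff ℝ (⊤ : ℕ∞) (deriv g) := by
    have := hg.iterate_deriv 1
    simpa using this
  set M := (⨆ j : Fin (n + 1), ⨆ θ : ℝ, |deriv^[(j : ℕ)] f θ|) with hMdef
  set S := ∑ k ∈ Finset.range (n + 1), ∫ θ in (0:ℝ)..(2 * π), (deriv^[k] g θ) ^ 2 with hSdef
  have cg : ∀ k, Continuous (deriv^[k] g) := fun k => (hg.iterate_deriv k).continuous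
  have cf : ∀ k, Continuous (deriv^[k] f) := fun k => (hf.iterate_deriv k).continuous
  have pf : ∀ k, Function.Periodic (deriv^[k] f) (2 * π) := by
    intro k
    induction k with
    | zero => exact hfp
    | succ k ih =>
      intro x
      have h1 : (fun y => deriv^[k] f (y + 2 * π)) = deriv^[k] f := funext fun y => ih y
      rw [Function.iterate_succ_apply']
      calc deriv (deriv^[k] f) (x + 2 * π)
          = deriv (fun y => deriv^[k] f (y + 2 * π)) x := (deriv_comp_add_const _ _ x).symm
        _ = deriv (deriv^[k] f) x := by rw [h1]
  have pg : ∀ k, Function.Periodic (deriv^[k] g) (2 * π) := by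
    intro k
    induction k with
    | zero => exact hgp
    | succ k ih =>
      intro x
      have h1 : (fun y => deriv^[k] g (y + 2 * π)) = deriv^[k] g := funext fun y => ih y
      rw [Function.iterate_succ_apply']
      calc deriv (deriv^[k] g) (x + 2 * π)
          = deriv (fun y => deriv^[k] g (y + 2 * π)) x := (deriv_comp_add_const _ _ x).symm
        _ = deriv (deriv^[k] g) x := by rw [h1]
  -- boundedness by M
  have hM : ∀ j, j ≤ n → ∀ θ, |deriv^[j] f θ| ≤ M := by
    intro j hj θ
    have hper : Function.Periodic (fun θ => |deriv^[j] f θ|) (2 * π) := fun x => by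
      simp [pf j x]
    have hbdd : BddAbove (Set.range fun θ => |deriv^[j] f θ|) := by
      rw [← hper.image_Icc Real.two_pi_pos 0]
      exact (isCompact_Icc.image (cf j).abs).bddAbove
    have h1 : |deriv^[j] f θ| ≤ ⨆ θ : ℝ, |deriv^[j] f θ| := le_ciSup hbdd θ
    have h2 : (⨆ θ : ℝ, |deriv^[j] f θ|) ≤ M := by
      have := le_ciSup (f := fun j : Fin (n + 1) => ⨆ θ : ℝ, |deriv^[(j : ℕ)] f θ|)
        (Finite.bddAbove_range _) (⟨j, by omega⟩ : Fin (n + 1))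
      simpa using this
    exact h1.trans h2
  have hM0 : 0 ≤ M := (abs_nonneg _).trans (hM 0 (by omega) 0)
  -- bounds with S
  have hSk : ∀ j, j ≤ n → (∫ θ in (0:ℝ)..(2 * π), (deriv^[j] g θ) ^ 2) ≤ S := by
    intro j hj
    apply Finset.single_le_sum (f := fun k => ∫ θ in (0:ℝ)..(2 * π), (deriv^[k] g θ) ^ 2)
    · intro k _
      apply intervalIntegral.integral_nonneg (by positivity)
      intro x _
      positivity
    · exact Finset.mem_range.mpr (by omega)
  have hS0 : 0 ≤ S := by
    apply Finset.sum_nonneg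
    intro k _
    apply intervalIntegral.integral_nonneg (by positivity)
    intro x _
    positivity
  -- the per-(k,i) integral bound
  have bound_ki : ∀ k, k ≤ n → ∀ i, i ≤ k →
      (∫ θ in (0:ℝ)..(2 * π), deriv^[i] f θ * deriv^[k - i + 1] g θ * deriv^[k] g θ)
        ≤ M * S := by
    intro k hk i hi
    by_cases hcase : k - i + 1 ≤ n
    · have := integral_triple_bound (cf i) (cg (k - i + 1)) (cg k) (fun θ => hM i (by omega) θ)
      calc (∫ θ in (0:ℝ)..(2 * π), deriv^[i] f θ * deriv^[k - i + 1] g θ * deriv^[k] g θ)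
          ≤ M / 2 * ((∫ θ in (0:ℝ)..(2 * π), deriv^[k - i + 1] g θ ^ 2)
              + ∫ θ in (0:ℝ)..(2 * π), deriv^[k] g θ ^ 2) := this
        _ ≤ M / 2 * (S + S) := by
            have := hSk (k - i + 1) hcase
            have := hSk k hk
            nlinarith
        _ = M * S := by ring
    · -- top order term: i = 0, k = n, integrate by parts
      have hi0 : i = 0 := by omega
      have hkn : k = n := by omega
      subst hi0
      rw [hkn]
      have hk' := hk
      have hrw : (∫ θ in (0:ℝ)..(2 * π), deriv^[0] f θ * deriv^[n - 0 + 1] g θ * deriv^[n] g θ)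
          = ∫ θ in (0:ℝ)..(2 * π), f θ * (deriv (deriv^[n] g) θ * deriv^[n] g θ) := by
        apply intervalIntegral.integral_congr
        intro x _
        simp only [Function.iterate_zero_apply, Nat.sub_zero]
        rw [← Function.iterate_succ_apply' deriv n g]
        ring
      rw [hrw, ibp_periodic hf (hg.iterate_deriv n)
        (by simpa using hfp 0) (by simpa using (pg n) 0)]
      set A := ∫ θ in (0:ℝ)..(2 * π), deriv f θ * (deriv^[n] g θ) ^ 2 with hA
      set B := ∫ θ in (0:ℝ)..(2 * π), (deriv^[n] g θ) ^ 2 with hB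
      have cf1 : Continuous (deriv f) := hf.continuous_deriv (by simp)
      have hMf : ∀ θ, |deriv f θ| ≤ M := by
        intro θ
        have := hM 1 hn θ
        simpa using this
      have hlow : (∫ θ in (0:ℝ)..(2 * π), (-M) * (deriv^[n] g θ) ^ 2) ≤ A := by
        apply intervalIntegral.integral_mono_on (by positivity)
          (Continuous.intervalIntegrable (by fun_prop) _ _)
          (Continuous.intervalIntegrable (by fun_prop) _ _)
        intro x _
        have h1 : -M ≤ deriv f x := neg_le_of_abs_le (hMf x)
        exact mul_le_mul_of_nonneg_right h1 (sq_nonneg _)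
      rw [intervalIntegral.integral_const_mul] at hlow
      have hBS : B ≤ S := hSk n le_rfl
      have hB0 : 0 ≤ B := by
        apply intervalIntegral.integral_nonneg (by positivity)
        intro x _
        positivity
      nlinarith [mul_le_mul_of_nonneg_left hBS hM0]
  -- expand each term via Leibniz and sum up
  have term_bound : ∀ k, k ≤ n →
      (∫ θ in (0:ℝ)..(2 * π), deriv^[k] (fun θ => f θ * deriv g θ) θ * deriv^[k] g θ)
        ≤ (2:ℝ) ^ k * (M * S) := by
    intro k hk
    have hrw : (∫ θ in (0:ℝ)..(2 * π), deriv^[k] (fun θ => f θ * deriv g θ) θ * deriv^[k] g θ)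
        = ∑ i ∈ Finset.range (k + 1), (k.choose i : ℝ) *
            ∫ θ in (0:ℝ)..(2 * π), deriv^[i] f θ * deriv^[k - i + 1] g θ * deriv^[k] g θ := by
      rw [show (∫ θ in (0:ℝ)..(2 * π), deriv^[k] (fun θ => f θ * deriv g θ) θ * deriv^[k] g θ)
          = ∫ θ in (0:ℝ)..(2 * π), ∑ i ∈ Finset.range (k + 1), (k.choose i : ℝ) *
              (deriv^[i] f θ * deriv^[k - i + 1] g θ * deriv^[k] g θ) from by
        apply intervalIntegral.integral_congr
        intro x _
        dsimp only
        rw [leibniz_iter hf hg' k x, Finset.sum_mul]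
        apply Finset.sum_congr rfl
        intro i _
        rw [Function.iterate_succ_apply deriv (k - i) g]
        ring]
      rw [intervalIntegral.integral_finset_sum]
      · apply Finset.sum_congr rfl
        intro i _
        rw [intervalIntegral.integral_const_mul]
      · intro i _
        exact Continuous.intervalIntegrable (by fun_prop) _ _
    rw [hrw]
    calc (∑ i ∈ Finset.range (k + 1), (k.choose i : ℝ) *
            ∫ θ in (0:ℝ)..(2 * π), deriv^[i] f θ * deriv^[k - i + 1] g θ * deriv^[k] g θ)
        ≤ ∑ i ∈ Finset.range (k + 1), (k.choose i : ℝ) * (M * S) := by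
          apply Finset.sum_le_sum
          intro i hi
          exact mul_le_mul_of_nonneg_left
            (bound_ki k hk i (Nat.lt_succ_iff.mp (Finset.mem_range.mp hi)))
            (by positivity)
      _ = (2:ℝ) ^ k * (M * S) := by
          rw [← Finset.sum_mul]
          congr 1
          rw [← Nat.cast_sum, Nat.sum_range_choose]
          push_cast
          ring
  calc (∑ k ∈ Finset.range (n + 1),
          ∫ θ in (0:ℝ)..(2 * π), deriv^[k] (fun θ => f θ * deriv g θ) θ * deriv^[k] g θ)
      ≤ ∑ k ∈ Finset.range (n + 1), (2:ℝ) ^ k * (M * S) := by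
        apply Finset.sum_le_sum
        intro k hk
        exact term_bound k (Nat.lt_succ_iff.mp (Finset.mem_range.mp hk))
    _ = ((2:ℝ) ^ (n + 1) - 1) * (M * S) := by
        rw [← Finset.sum_mul, geom_sum_eq (by norm_num : (2:ℝ) ≠ 1)]
        ring
    _ ≤ (2:ℝ) ^ (n + 1) * M * S := by nlinarith [mul_nonneg hM0 hS0]
end

section
/- Let c > 0 and ω₀ ∈ (0, π). Suppose ω : [0,∞) → ℝ is differentiable with ω(0) = ω₀ and ω′(t) ≤ −c·sin(ω(t)) for all t ≥ 0. Then for all t ≥ 0, ω(t) ≤ π − 2·arctan( (cos(ω₀/2)/sin(ω₀/2)) · e^{c·t} ). (ODE comparison with the explicit solution of γ′ = −c·sin γ, γ(0) = ω₀, namely γ(t) = π − 2·arctan(cot(ω₀/2)·e^{c·t}) = 2·arccot(cot(ω₀/2)·e^{c·t}).) -/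
/-!
The explicit curve `γ t = π - 2 arctan (cot (ω₀/2) e^{c t})` solves `γ' = -c sin γ` with
`γ 0 = ω₀`, because `sin (2 arctan u) = 2u / (1 + u²)`. Since `x ↦ -c sin x` is `|c|`-Lipschitz,
a subsolution starting below a solution stays below it: `ω` cannot touch the barrier
`γ + ε e^{(|c|+1)(s - t)}` from below, as at a contact point `ω' ≤ -c sin ω` is smaller than the
barrier's slope; letting `ε → 0` gives `ω t ≤ γ t`.
-/

open Real Filter

open Set in
theorem LipschitzWith.image_le_of_deriv_right_le {F : ℝ → ℝ} {K : NNReal} (hF : LipschitzWith K F)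
    {f f' g : ℝ → ℝ} {a b : ℝ} (hf : ContinuousOn f (Icc a b))
    (hf' : ∀ x ∈ Ico a b, HasDerivWithinAt f (f' x) (Ici x) x)
    (hf'F : ∀ x ∈ Ico a b, f' x ≤ F (f x)) (hg : ∀ x, HasDerivAt g (F (g x)) x)
    (ha : f a ≤ g a) : ∀ ⦃x⦄, x ∈ Icc a b → f x ≤ g x := by
  intro x hx
  refine le_of_forall_pos_le_add fun ε hε => ?_
  set B : ℝ → ℝ := fun y => g y + ε * exp ((K + 1) * (y - x))
  have hB : ∀ y, HasDerivAt B (F (g y) + ε * exp ((K + 1) * (y - x)) * (K + 1)) y := fun y =>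
    ((hg y).fun_add ((((hasDerivAt_id y).sub_const x).const_mul ((K : ℝ) + 1)).exp.const_mul ε))
      |>.congr_deriv (by simp only [id_eq, mul_one]; ring)
  have bound : ∀ y ∈ Ico a b, f y = B y →
      f' y < F (g y) + ε * exp ((K + 1) * (y - x)) * (K + 1) := by
    intro y hy hfy
    have hgap : 0 < ε * exp ((K + 1) * (y - x)) := by positivity
    have hlip : F (f y) ≤ F (g y) + K * (ε * exp ((K + 1) * (y - x))) := by
      have := hF.dist_le_mul (f y) (g y)
      rw [dist_eq, dist_eq, hfy, add_sub_cancel_left, abs_of_pos hgap] at this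
      rw [hfy]
      linarith [le_abs_self (F (B y) - F (g y))]
    nlinarith [hf'F y hy]
  have hBa : g a ≤ B a := le_add_of_nonneg_right (by positivity)
  simpa [B] using image_le_of_deriv_right_lt_deriv_boundary hf hf' (ha.trans hBa) hB bound hx

theorem sin_two_mul_arctan (x : ℝ) : sin (2 * arctan x) = 2 * x / (1 + x ^ 2) := by
  have hpos : 0 < 1 + x ^ 2 := by positivity
  rw [sin_two_mul, sin_arctan, cos_arctan]
  field_simp
  rw [sq_sqrt hpos.le]

theorem hasDerivAt_pi_sub_two_mul_arctan_mul_exp (c k t : ℝ) :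
    HasDerivAt (fun t => π - 2 * arctan (k * exp (c * t)))
      (-c * sin (π - 2 * arctan (k * exp (c * t)))) t := by
  have := ((((hasDerivAt_id t).const_mul c).exp.const_mul k).arctan.const_mul 2).const_sub π
  refine this.congr_deriv ?_
  rw [sin_pi_sub, sin_two_mul_arctan]
  simp only [id_eq, mul_one]
  field_simp

theorem pi_sub_two_mul_arctan_cot_half {θ : ℝ} (hθ : θ ∈ Set.Ioo 0 π) :
    π - 2 * arctan (cos (θ / 2) / sin (θ / 2)) = θ := by
  obtain ⟨h0, hπ⟩ := hθ
  have htan : 0 < tan (θ / 2) := tan_pos_of_pos_of_lt_pi_div_two (by linarith) (by linarith)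
  rw [← inv_div, ← tan_eq_sin_div_cos, arctan_inv_of_pos htan,
    arctan_tan (by linarith) (by linarith)]
  ring

theorem ode_comparison_sin_general (c ω₀ : ℝ) (hω₀ : ω₀ ∈ Set.Ioo 0 π)
    (ω ω' : ℝ → ℝ) (hω0 : ω 0 = ω₀)
    (hd : ∀ t, 0 ≤ t → HasDerivWithinAt ω (ω' t) (Set.Ici 0) t)
    (hineq : ∀ t, 0 ≤ t → ω' t ≤ -c * Real.sin (ω t)) :
    ∀ t, 0 ≤ t →
      ω t ≤ π - 2 * Real.arctan ((Real.cos (ω₀ / 2) / Real.sin (ω₀ / 2)) * Real.exp (c * t)) := by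
  intro t ht
  have hF : LipschitzWith ‖c‖₊ fun x => -c * sin x := by
    have := (lipschitzWith_smul (-c)).comp lipschitzWith_sin
    rwa [nnnorm_neg, mul_one] at this
  refine hF.image_le_of_deriv_right_le (b := t)
    (fun x hx => (hd x hx.1).continuousWithinAt.mono fun y hy => hy.1)
    (fun x hx => (hd x hx.1).mono (Set.Ici_subset_Ici.2 hx.1)) (fun x hx => hineq x hx.1)
    (hasDerivAt_pi_sub_two_mul_arctan_mul_exp c _) ?_ ⟨ht, le_rfl⟩
  simp [hω0, pi_sub_two_mul_arctan_cot_half hω₀]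

/-- ODE comparison with the explicit solution of `γ′ = −c·sin γ`. -/
theorem ode_comparison_sin (c ω₀ : ℝ) (hc : 0 < c) (hω₀ : ω₀ ∈ Set.Ioo 0 π)
    (ω ω' : ℝ → ℝ) (hω0 : ω 0 = ω₀)
    (hd : ∀ t, 0 ≤ t → HasDerivWithinAt ω (ω' t) (Set.Ici 0) t)
    (hineq : ∀ t, 0 ≤ t → ω' t ≤ -c * Real.sin (ω t)) :
    ∀ t, 0 ≤ t →
      ω t ≤ π - 2 * Real.arctan ((Real.cos (ω₀ / 2) / Real.sin (ω₀ / 2)) * Real.exp (c * t)) :=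
  ode_comparison_sin_general c ω₀ hω₀ ω ω' hω0 hd hineq
end

section
/- Let W : ℝ → ℝ be continuous and 2π-periodic such that for every nonzero integer n, the Fourier coefficient c_n(W) := (1/2π)·∫₀^{2π} W(θ)·e^{−i·n·θ} dθ is nonzero. Let μ be a Borel probability measure on the circle ℝ/2πℤ such that the function θ ↦ ∫ W(θ − ω) dμ(ω) is constant. Then μ is the normalized uniform (Haar) probability measure on the circle. -/
open Real Filter MeasureTheory AddCircle

instance : Fact ((0 : ℝ) < 2 * π) := ⟨by positivity⟩

/-!
Taking the `n`-th Fourier coefficient of the constant function `θ ↦ ∫ W (θ - ω) dμ(ω)` gives,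
by Fubini and translation invariance of Haar measure, `0 = c_n(W) · ∫ e_n dμ` for `n ≠ 0`.
Since `c_n(W) ≠ 0`, all nontrivial Fourier moments of `μ` vanish, as do those of Haar measure.
The trigonometric polynomials are dense in `C(𝕋, ℂ)` (Stone–Weierstrass), so `μ` and Haar measure
integrate every continuous function alike, and hence coincide.
-/

namespace ContinuousMap

variable {X E : Type*} [TopologicalSpace X] [CompactSpace X] [MeasurableSpace X] [BorelSpace X]
  [NormedAddCommGroup E] [NormedSpace ℂ E] [CompleteSpace E] [SecondCountableTopologyEither X E]

noncomputable def integralCLM (μ : Measure X) [IsFiniteMeasure μ] : C(X, E) →L[ℂ] E :=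
  (L1.integralCLM' ℂ).comp (toLp 1 μ ℂ)

theorem integralCLM_apply (μ : Measure X) [IsFiniteMeasure μ] (f : C(X, E)) :
    integralCLM μ f = ∫ x, f x ∂μ := by
  rw [integralCLM, ContinuousLinearMap.comp_apply, ← L1.integral_eq' ℂ, L1.integral_eq_integral]
  exact integral_congr_ae (coeFn_toLp μ f)

end ContinuousMap

namespace AddCircle

theorem fourier_apply_add {T : ℝ} (n : ℤ) (x y : AddCircle T) :
    fourier n (x + y) = fourier n x * fourier n y := by
  simp only [fourier_apply, smul_add, toCircle_add, Circle.coe_mul]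

variable {T : ℝ} [Fact (0 < T)]

theorem integral_fourier_haarAddCircle_of_ne_zero {n : ℤ} (hn : n ≠ 0) :
    ∫ x, fourier n x ∂(haarAddCircle : Measure (AddCircle T)) = 0 := by
  simpa [fourierCoeff, fourier_zero, hn] using congr_fun (fourierCoeff_fourier (T := T) 0) (-n)

theorem measure_ext_of_integral_fourier_eq {μ ν : Measure (AddCircle T)}
    [IsFiniteMeasure μ] [IsFiniteMeasure ν]
    (h : ∀ n : ℤ, ∫ x, fourier n x ∂μ = ∫ x, fourier n x ∂ν) : μ = ν := by
  have hCLM : ContinuousMap.integralCLM (E := ℂ) μ = ContinuousMap.integralCLM ν := by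
    refine ContinuousLinearMap.ext_on
      (Submodule.dense_iff_topologicalClosure_eq_top.mpr span_fourier_closure_eq_top) ?_
    rintro _ ⟨n, rfl⟩
    simpa only [ContinuousMap.integralCLM_apply] using h n
  refine ext_of_forall_integral_eq_of_IsFiniteMeasure fun f => Complex.ofReal_injective ?_
  have hf := congr($hCLM ⟨fun x => (f x : ℂ), by fun_prop⟩)
  rw [← integral_complex_ofReal, ← integral_complex_ofReal]
  simpa only [ContinuousMap.integralCLM_apply, ContinuousMap.coe_mk] using hf

theorem eq_haarAddCircle_of_integral_fourier_eq_zero (μ : Measure (AddCircle T))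
    [IsProbabilityMeasure μ] (h : ∀ n : ℤ, n ≠ 0 → ∫ x, fourier n x ∂μ = 0) :
    μ = haarAddCircle := by
  refine measure_ext_of_integral_fourier_eq fun n => ?_
  rcases eq_or_ne n 0 with rfl | hn
  · simp
  · rw [h n hn, integral_fourier_haarAddCircle_of_ne_zero hn]

theorem integral_convolution_mul_fourier {W : AddCircle T → ℂ} (hW : Continuous W)
    (μ : Measure (AddCircle T)) [IsFiniteMeasure μ] (n : ℤ) :
    ∫ θ, (∫ ω, W (θ - ω) ∂μ) * fourier n θ ∂haarAddCircle =
      (∫ θ, W θ * fourier n θ ∂haarAddCircle) * ∫ ω, fourier n ω ∂μ := by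
  have hint : Integrable (Function.uncurry fun θ ω => W (θ - ω) * fourier n θ)
      (haarAddCircle.prod μ) :=
    (by fun_prop : Continuous _).integrable_of_hasCompactSupport
      (HasCompactSupport.of_compactSpace _)
  have htranslate (ω : AddCircle T) :
      ∫ θ, W (θ - ω) * fourier n θ ∂haarAddCircle =
        (∫ θ, W θ * fourier n θ ∂haarAddCircle) * fourier n ω := by
    rw [← integral_mul_const,
      ← integral_sub_right_eq_self (fun θ => W θ * fourier n θ * fourier n ω) ω]
    simp_rw [mul_assoc, ← fourier_apply_add, sub_add_cancel]
  calc ∫ θ, (∫ ω, W (θ - ω) ∂μ) * fourier n θ ∂haarAddCircle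
      = ∫ θ, ∫ ω, W (θ - ω) * fourier n θ ∂μ ∂haarAddCircle := by simp_rw [integral_mul_const]
    _ = ∫ ω, ∫ θ, W (θ - ω) * fourier n θ ∂haarAddCircle ∂μ := integral_integral_swap hint
    _ = _ := by simp_rw [htranslate, integral_const_mul]

end AddCircle

/-- If the interaction potential `W` has all nonzero Fourier coefficients nonzero and the
velocity potential `W ∗ μ` is constant on the circle, then `μ` is the uniform (Haar)
probability measure. -/
theorem constant_potential_implies_uniform
    (W : AddCircle (2 * π) → ℝ) (hW : Continuous W)
    (hc : ∀ n : ℤ, n ≠ 0 →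
      (∫ θ : AddCircle (2 * π), (W θ : ℂ) * fourier (-n) θ ∂haarAddCircle) ≠ 0)
    (μ : Measure (AddCircle (2 * π))) [IsProbabilityMeasure μ]
    (hconst : ∃ K : ℝ, ∀ θ : AddCircle (2 * π), (∫ ω, W (θ - ω) ∂μ) = K) :
    μ = haarAddCircle := by
  obtain ⟨K, hK⟩ := hconst
  refine eq_haarAddCircle_of_integral_fourier_eq_zero μ fun n hn => ?_
  have hconv := integral_convolution_mul_fourier (W := fun θ => (W θ : ℂ)) (by fun_prop) μ n
  simp_rw [integral_complex_ofReal, hK, integral_const_mul,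
    integral_fourier_haarAddCircle_of_ne_zero hn, mul_zero] at hconv
  have hcoeff := hc (-n) (neg_ne_zero.mpr hn)
  rw [neg_neg] at hcoeff
  exact (mul_eq_zero.mp hconv.symm).resolve_left hcoeff
end
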